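/- Let T be an infinite rooted tree, k ≥ 1 a natural number, and f : T → ℂ in the iterated logarithmic Lipschitz space L^(k), with ‖f‖_k = |f(o)| + sup_{v≠o} |f'(v)|·Λ_k(|v|). Then for every vertex v ≠ o, |f(v)| ≤ ℓ_k(|v|)·‖f‖_k. -/

import Mathlib

open Real Filter

/-- Iterated logarithm: ℓ₀(x) = x, ℓ_{j+1}(x) = 1 + log ℓ_j(x). -/
noncomputable def ell : ℕ → ℝ → ℝ
  | 0, x => x
  | j + 1, x => 1 + Real.log (ell j x)

/-- Λ_k(x) = ∏_{j=0}^{k-1} ℓ_j(x). -/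
noncomputable def Lam (k : ℕ) (x : ℝ) : ℝ := ∏ j ∈ Finset.range k, ell j x

/-- Discrete derivative of f on a rooted tree given by a parent map:
`f v - f (parent v)` (automatically 0 at the root since `parent o = o`). -/
def Der {V : Type*} (parent : V → V) (f : V → ℂ) (v : V) : ℂ := f v - f (parent v)

/-- The set of values |f'(v)|·Λ_k(|v|) over v ≠ o; f ∈ L^(k) iff this set is bounded above. -/
def lipSet {V : Type*} (o : V) (parent : V → V) (depth : V → ℕ) (k : ℕ) (f : V → ℂ) : Set ℝ :=
  {r | ∃ v, v ≠ o ∧ r = ‖Der parent f v‖ * Lam k (depth v)}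

/-- ‖f‖_k = |f(o)| + sup_{v ≠ o} |f'(v)|·Λ_k(|v|). -/
noncomputable def lipNorm {V : Type*} (o : V) (parent : V → V) (depth : V → ℕ) (k : ℕ)
    (f : V → ℂ) : ℝ :=
  ‖f o‖ + sSup (lipSet o parent depth k f)

/-!
Walking from `v` to the root, `f v - f o` is the sum of the increments `f'(u)` along the
path, and the vertex at depth `j` contributes at most `‖f‖_k / Λ_k(j)`. It remains to bound
`∑_{j=1}^n 1/Λ_k(j) ≤ ℓ_k(n)`: since `ℓ_k' = 1/Λ_k` and `Λ_k` is increasing, each term is at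
most `ℓ_k(j) - ℓ_k(j-1)`, and the sum telescopes.
-/

open Finset

lemma Lam_succ (k : ℕ) (x : ℝ) : Lam (k + 1) x = Lam k x * ell k x :=
  prod_range_succ _ _

lemma one_le_ell (k : ℕ) {x : ℝ} (hx : 1 ≤ x) : 1 ≤ ell k x := by
  induction k with
  | zero => exact hx
  | succ k ih => simpa [ell] using Real.log_nonneg ih

lemma one_le_Lam (k : ℕ) {x : ℝ} (hx : 1 ≤ x) : 1 ≤ Lam k x := by
  induction k with
  | zero => simp [Lam]
  | succ k ih => rw [Lam_succ]; exact one_le_mul_of_one_le_of_one_le ih (one_le_ell k hx)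

lemma Lam_pos (k : ℕ) {x : ℝ} (hx : 1 ≤ x) : 0 < Lam k x :=
  zero_lt_one.trans_le (one_le_Lam k hx)

lemma ell_one (k : ℕ) : ell k 1 = 1 := by
  induction k with
  | zero => rfl
  | succ k ih => simp [ell, ih]

lemma Lam_one (k : ℕ) : Lam k 1 = 1 := by
  simp [Lam, ell_one]

lemma div_Lam_le_ell_sub_ell (k : ℕ) {x y : ℝ} (hx : 1 ≤ x) (hxy : x ≤ y) :
    (y - x) / Lam k y ≤ ell k y - ell k x := by
  induction k with
  | zero => simp [Lam, ell]
  | succ k ih =>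
    have ha : 1 ≤ ell k x := one_le_ell k hx
    have hab : ell k x ≤ ell k y := by
      have : 0 ≤ (y - x) / Lam k y := div_nonneg (by linarith) (Lam_pos k (hx.trans hxy)).le
      linarith
    have hb : 0 < ell k y := by linarith
    have hlog : 1 - ell k x / ell k y ≤ Real.log (ell k y) - Real.log (ell k x) := by
      have := Real.one_sub_inv_le_log_of_pos (x := ell k y / ell k x) (by positivity)
      rwa [inv_div, Real.log_div (by positivity) (by positivity)] at this
    calc (y - x) / Lam (k + 1) y = (y - x) / Lam k y / ell k y := by rw [Lam_succ, div_div]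
      _ ≤ (ell k y - ell k x) / ell k y := by gcongr
      _ = 1 - ell k x / ell k y := by field_simp
      _ ≤ ell (k + 1) y - ell (k + 1) x := by simpa [ell] using hlog

lemma sum_inv_Lam_le_ell (k : ℕ) {n : ℕ} (hn : 1 ≤ n) :
    ∑ j ∈ Icc 1 n, (Lam k j)⁻¹ ≤ ell k n := by
  induction n, hn using Nat.le_induction with
  | base => simp [Lam_one, ell_one]
  | succ n hn ih =>
    have hstep :=
      div_Lam_le_ell_sub_ell k (x := n) (y := n + 1) (by exact_mod_cast hn) (by linarith)
    rw [add_sub_cancel_left, one_div] at hstep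
    rw [sum_Icc_succ_top (by omega)]
    push_cast
    linarith

section Tree

variable {V : Type*} {o : V} {parent : V → V} {depth : V → ℕ}

lemma one_le_depth (hdepth : ∀ v, v ≠ o → depth v = depth (parent v) + 1) {v : V} (hv : v ≠ o) :
    1 ≤ depth v := by
  rw [hdepth v hv]; omega

lemma norm_le_norm_root_add_sum_Icc (hdepth : ∀ v, v ≠ o → depth v = depth (parent v) + 1)
    {f : V → ℂ} {w : ℕ → ℝ} (hw : ∀ j, 1 ≤ j → 0 ≤ w j)
    (hDer : ∀ v, v ≠ o → ‖Der parent f v‖ ≤ w (depth v)) (v : V) :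
    ‖f v‖ ≤ ‖f o‖ + ∑ j ∈ Icc 1 (depth v), w j := by
  induction hn : depth v generalizing v with
  | zero =>
    obtain rfl : v = o := by by_contra hv; have := one_le_depth hdepth hv; omega
    simp
  | succ n ih =>
    by_cases hv : v = o
    · rw [hv]
      linarith [sum_nonneg (s := Icc 1 (n + 1)) fun j hj => hw j (mem_Icc.mp hj).1]
    have hp : depth (parent v) = n := by have := hdepth v hv; omega
    rw [sum_Icc_succ_top (by omega)]
    calc ‖f v‖ = ‖f (parent v) + Der parent f v‖ := by simp [Der]
      _ ≤ ‖f (parent v)‖ + ‖Der parent f v‖ := norm_add_le _ _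
      _ ≤ _ := by linarith [ih (parent v) hp, hn ▸ hDer v hv]

lemma sSup_lipSet_nonneg (hdepth : ∀ v, v ≠ o → depth v = depth (parent v) + 1)
    (k : ℕ) (f : V → ℂ) : 0 ≤ sSup (lipSet o parent depth k f) := by
  refine Real.sSup_nonneg ?_
  rintro _ ⟨v, hv, rfl⟩
  exact mul_nonneg (norm_nonneg _) (Lam_pos k (by exact_mod_cast one_le_depth hdepth hv)).le

lemma norm_Der_le_sSup_lipSet_div (hdepth : ∀ v, v ≠ o → depth v = depth (parent v) + 1)
    {k : ℕ} {f : V → ℂ} (hf : BddAbove (lipSet o parent depth k f)) {v : V} (hv : v ≠ o) :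
    ‖Der parent f v‖ ≤ sSup (lipSet o parent depth k f) * (Lam k (depth v))⁻¹ := by
  rw [← div_eq_mul_inv, le_div_iff₀ (Lam_pos k (by exact_mod_cast one_le_depth hdepth hv))]
  exact le_csSup hf ⟨v, hv, rfl⟩

end Tree

theorem pointEval_Lk_general {V : Type*} (o : V) (parent : V → V) (depth : V → ℕ)
    (hdepth : ∀ v, v ≠ o → depth v = depth (parent v) + 1)
    (k : ℕ)
    (f : V → ℂ) (hf : BddAbove (lipSet o parent depth k f)) :
    ∀ v, v ≠ o →
      ‖f v‖ ≤ ell k (depth v) * lipNorm o parent depth k f := by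
  intro v hv
  set L := sSup (lipSet o parent depth k f)
  have hL : 0 ≤ L := sSup_lipSet_nonneg hdepth k f
  have hv1 : 1 ≤ depth v := one_le_depth hdepth hv
  have hell : 1 ≤ ell k (depth v) := one_le_ell k (by exact_mod_cast hv1)
  calc ‖f v‖ ≤ ‖f o‖ + ∑ j ∈ Icc 1 (depth v), L * (Lam k j)⁻¹ :=
        norm_le_norm_root_add_sum_Icc hdepth
          (fun j hj => mul_nonneg hL (inv_nonneg.mpr (Lam_pos k (by exact_mod_cast hj)).le))
          (fun u hu => norm_Der_le_sSup_lipSet_div hdepth hf hu) v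
    _ = ‖f o‖ + L * ∑ j ∈ Icc 1 (depth v), (Lam k j)⁻¹ := by rw [mul_sum]
    _ ≤ ‖f o‖ * ell k (depth v) + L * ell k (depth v) := by
        gcongr
        · exact le_mul_of_one_le_right (norm_nonneg _) hell
        · exact sum_inv_Lam_le_ell k hv1
    _ = ell k (depth v) * lipNorm o parent depth k f := by rw [lipNorm]; ring

/-- Point-evaluation bound for L^(k), k ≥ 1: |f(v)| ≤ ℓ_k(|v|)·‖f‖_k for v ≠ o. -/
theorem pointEval_Lk {V : Type*} (o : V) (parent : V → V) (depth : V → ℕ)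
    (hpar : parent o = o) (hdepth0 : depth o = 0)
    (hdepth : ∀ v, v ≠ o → depth v = depth (parent v) + 1)
    (hchild : ∀ v, ∃ w, w ≠ o ∧ parent w = v)
    (k : ℕ) (hk : 1 ≤ k)
    (f : V → ℂ) (hf : BddAbove (lipSet o parent depth k f)) :
    ∀ v, v ≠ o →
      ‖f v‖ ≤ ell k (depth v) * lipNorm o parent depth k f :=
  pointEval_Lk_general o parent depth hdepth k f hf
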